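/- arXiv:quant-ph/0403140 — 4 statements merged into one kernel-verified Lean document; each statement's English description precedes it below -/
import Mathlib

section
/- For every integer b ≥ 1 and every function f : {0,1}^b × {0,1}^b → {0,1}, there exists a family of vectors ψ_a in ℂ^{2^b} ⊕ ℂ^{2^b}, indexed by a ∈ {0,1}^b, that is orthonormal and such that for every w ∈ {0,1}^b the coordinate of ψ_a at the basis index w of the first summand equals (−1)^{f(w,a)} / 2^b. -/
/-!
The matrix `A w a = (-1)^{f(w,a)} / 2^b` has Frobenius norm `1`, so by Cauchy–Schwarz it is a
contraction: `1 - Aᴴ A` is positive semidefinite. Writing `1 - Aᴴ A = Bᴴ B`, the stacked matrix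
`[A; B]` satisfies `Aᴴ A + Bᴴ B = 1`, i.e. its columns `ψ_a` are orthonormal, and their upper
halves are the columns of `A`.
-/

open Matrix
open scoped ComplexOrder

namespace Matrix

variable {𝕜 m n p : Type*} [RCLike 𝕜] [Fintype m] [Fintype n]

lemma star_dotProduct_self_eq_sum_norm_sq (v : n → 𝕜) :
    star v ⬝ᵥ v = ((∑ i, ‖v i‖ ^ 2 : ℝ) : 𝕜) := by
  simp [dotProduct, RCLike.conj_mul]

lemma sum_norm_mulVec_sq_le (A : Matrix m n 𝕜) (x : n → 𝕜) :
    ∑ i, ‖(A *ᵥ x) i‖ ^ 2 ≤ (∑ i, ∑ j, ‖A i j‖ ^ 2) * ∑ j, ‖x j‖ ^ 2 := by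
  rw [Finset.sum_mul]
  refine Finset.sum_le_sum fun i _ => ?_
  calc ‖(A *ᵥ x) i‖ ^ 2 ≤ (∑ j, ‖A i j‖ * ‖x j‖) ^ 2 := by
        gcongr
        simpa only [mulVec, dotProduct, norm_mul] using
          norm_sum_le Finset.univ fun j => A i j * x j
    _ ≤ (∑ j, ‖A i j‖ ^ 2) * ∑ j, ‖x j‖ ^ 2 := Finset.sum_mul_sq_le_sq_mul_sq _ _ _

lemma posSemidef_one_sub_conjTranspose_mul_self_of_sum_norm_sq_le_one [DecidableEq n]
    {A : Matrix m n 𝕜} (hA : ∑ i, ∑ j, ‖A i j‖ ^ 2 ≤ 1) : (1 - Aᴴ * A).PosSemidef := by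
  refine .of_dotProduct_mulVec_nonneg
    (isHermitian_one.sub (isHermitian_conjTranspose_mul_self A)) fun x => ?_
  rw [sub_mulVec, dotProduct_sub, one_mulVec, ← mulVec_mulVec, dotProduct_mulVec,
    vecMul_conjTranspose, star_star, star_dotProduct_self_eq_sum_norm_sq,
    star_dotProduct_self_eq_sum_norm_sq, ← RCLike.ofReal_sub, RCLike.ofReal_nonneg, sub_nonneg]
  calc ∑ i, ‖(A *ᵥ x) i‖ ^ 2 ≤ (∑ i, ∑ j, ‖A i j‖ ^ 2) * ∑ j, ‖x j‖ ^ 2 :=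
        sum_norm_mulVec_sq_le A x
    _ ≤ ∑ j, ‖x j‖ ^ 2 := mul_le_of_le_one_left (by positivity) hA

open scoped MatrixOrder in
lemma exists_conjTranspose_mul_self_add_eq_one [DecidableEq n] {A : Matrix m n 𝕜}
    (hA : (1 - Aᴴ * A).PosSemidef) : ∃ B : Matrix n n 𝕜, Aᴴ * A + Bᴴ * B = 1 := by
  obtain ⟨B, hB⟩ := CStarAlgebra.nonneg_iff_eq_star_mul_self.mp hA.nonneg
  exact ⟨B, by rw [← star_eq_conjTranspose, ← hB, add_sub_cancel]⟩

lemma orthonormal_sumElim_cols [DecidableEq p] {A : Matrix m p 𝕜} {B : Matrix n p 𝕜}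
    (h : Aᴴ * A + Bᴴ * B = 1) :
    Orthonormal 𝕜 fun j =>
      (WithLp.toLp 2 (Sum.elim (A · j) (B · j)) : EuclideanSpace 𝕜 (m ⊕ n)) := by
  rw [orthonormal_iff_ite]
  intro j k
  rw [← one_apply, ← h]
  simp [PiLp.inner_apply, Fintype.sum_sum_type, mul_apply, mul_comm]

end Matrix

theorem stmt0_general (b : ℕ)
    (f : (Fin b → Bool) → (Fin b → Bool) → Bool) :
    ∃ ψ : (Fin b → Bool) → EuclideanSpace ℂ ((Fin b → Bool) ⊕ (Fin b → Bool)),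
      Orthonormal ℂ ψ ∧
      ∀ a w : Fin b → Bool,
        ψ a (Sum.inl w) = (if f w a then (-1 : ℂ) else 1) / 2 ^ b := by
  let A : Matrix (Fin b → Bool) (Fin b → Bool) ℂ :=
    of fun w a => (if f w a then -1 else 1) / 2 ^ b
  have hA : ∑ w, ∑ a, ‖A w a‖ ^ 2 = 1 := by
    have hnorm : ∀ w a, ‖A w a‖ = ((2 : ℝ) ^ b)⁻¹ := fun w a => by
      by_cases h : f w a <;> simp [A, h]
    simp [hnorm]
    field_simp
  obtain ⟨B, hB⟩ := exists_conjTranspose_mul_self_add_eq_one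
    (posSemidef_one_sub_conjTranspose_mul_self_of_sum_norm_sq_le_one hA.le)
  exact ⟨_, orthonormal_sumElim_cols hB, fun a w => rfl⟩

/-- For every `b ≥ 1` and every Boolean function `f` on pairs of `b`-bit
strings, there is an orthonormal family of vectors `ψ_a` in `ℂ^{2^b} ⊕ ℂ^{2^b}`
(indexed by `b`-bit strings `a`) whose coordinate at basis index `w` of the first
summand equals `(-1)^{f(w,a)} / 2^b`.  (Lemma 1 of the paper.) -/
theorem stmt0 (b : ℕ) (hb : 1 ≤ b)
    (f : (Fin b → Bool) → (Fin b → Bool) → Bool) :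
    ∃ ψ : (Fin b → Bool) → EuclideanSpace ℂ ((Fin b → Bool) ⊕ (Fin b → Bool)),
      Orthonormal ℂ ψ ∧
      ∀ a w : Fin b → Bool,
        ψ a (Sum.inl w) = (if f w a then (-1 : ℂ) else 1) / 2 ^ b :=
  stmt0_general b f
end

section
/- For every integer b ≥ 1 and every function f : {0,1}^b × {0,1}^b → {0,1}, there exists a two-outcome POVM (E0, E1) on ℂ^{2^{b+1}} such that for all a0, a1 ∈ {0,1}^b, ⟨Ψ_{a0 a1}, E_{f(a0,a1)} Ψ_{a0 a1}⟩ = 1/2 + 1/2^{b+1}. In other words, any Boolean function f(a0, a1) of the two b-bit halves can be computed with success probability exactly 1/2 + 1/2^{b+1} by a measurement of one copy of the superposition Ψ_{a0 a1}. -/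
/-!
For every pair `(a, a')` the vectors `|0,a⟩ ± |1,a'⟩` split `|0,a⟩⟨0,a| + |1,a'⟩⟨1,a'|` (up to
a factor 2) into two rank-one pieces; give outcome `k` the piece whose sign is `+` exactly when
`f a a' = k`. Summing over all `N²` pairs and dividing by `2N` gives a POVM. On `Ψ_{a0 a1}`, a
pair sharing neither index with `(a0, a1)` contributes nothing, a pair sharing one index
contributes the same to both outcomes, and only the pair `(a0, a1)` itself, where the sign is `+`
for `k = f a0 a1`, biases the outcome. Hence outcome `f a0 a1` has probability `1/2 + 1/(2N)`,
with `N = 2^b`.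
-/

open ComplexOrder Matrix

/-- The state `Ψ_{a0 a1} = (1/√2)(|0⟩⊗|a0⟩ + |1⟩⊗|a1⟩)` in `ℂ² ⊗ ℂ^{2^b}`,
written as a vector indexed by the standard basis `Bool × (Fin b → Bool)`. -/
noncomputable def Psi (b : ℕ) (a0 a1 : Fin b → Bool) : Bool × (Fin b → Bool) → ℂ :=
  fun p =>
    ((if p = (false, a0) then 1 else 0) + (if p = (true, a1) then 1 else 0)) /
      (Real.sqrt 2 : ℂ)

theorem vecMulVec_add_star_add_vecMulVec_sub_star {n R : Type*} [CommRing R] [StarRing R]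
    (u w : n → R) :
    vecMulVec (u + w) (star (u + w)) + vecMulVec (u - w) (star (u - w)) =
      (2 : R) • (vecMulVec u (star u) + vecMulVec w (star w)) := by
  ext i j
  simp only [Matrix.add_apply, Matrix.smul_apply, vecMulVec_apply, Pi.add_apply, Pi.sub_apply,
    Pi.star_apply, star_add, star_sub, smul_eq_mul]
  ring

theorem sum_vecMulVec_single_one {n R : Type*} [Fintype n] [DecidableEq n] [Semiring R] :
    ∑ i, vecMulVec (Pi.single i (1 : R)) (Pi.single i 1) = (1 : Matrix n n R) := by
  ext p q
  simp [Matrix.sum_apply, vecMulVec_apply, Pi.single_apply, one_apply]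

theorem star_dotProduct_vecMulVec_mulVec {n R : Type*} [Fintype n] [CommSemiring R] [StarRing R]
    (x v w : n → R) :
    star x ⬝ᵥ (vecMulVec v w *ᵥ x) = (star x ⬝ᵥ v) * (w ⬝ᵥ x) := by
  rw [vecMulVec_mulVec, dotProduct_smul]
  simp [mul_comm]

theorem star_smul_dotProduct_mulVec_smul {n : Type*} [Fintype n] (c : ℂ) (M : Matrix n n ℂ)
    (x : n → ℂ) : star (c • x) ⬝ᵥ (M *ᵥ (c • x)) = (star c * c) * (star x ⬝ᵥ (M *ᵥ x)) := by
  rw [star_smul, mulVec_smul, smul_dotProduct, dotProduct_smul, smul_eq_mul, smul_eq_mul]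
  ring

section PairPOVM

variable {α : Type*}

def pairSign (f : α → α → Bool) (k : Bool) (a a' : α) : ℂ := if f a a' = k then 1 else -1

theorem star_pairSign (f : α → α → Bool) (k : Bool) (a a' : α) :
    star (pairSign f k a a') = pairSign f k a a' := by
  unfold pairSign; split_ifs <;> simp

theorem pairSign_mul_self (f : α → α → Bool) (k : Bool) (a a' : α) :
    pairSign f k a a' * pairSign f k a a' = 1 := by
  unfold pairSign; split_ifs <;> simp

variable [DecidableEq α]

def pairVec (s : ℂ) (a a' : α) : Bool × α → ℂ :=
  Pi.single (false, a) 1 + s • Pi.single (true, a') 1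

theorem vecMulVec_pairVec_false_add_true (f : α → α → Bool) (a a' : α) :
    vecMulVec (pairVec (pairSign f false a a') a a') (star (pairVec (pairSign f false a a') a a')) +
      vecMulVec (pairVec (pairSign f true a a') a a') (star (pairVec (pairSign f true a a') a a')) =
    (2 : ℂ) • (vecMulVec (Pi.single (false, a) 1) (Pi.single (false, a) 1) +
      vecMulVec (Pi.single (true, a') 1) (Pi.single (true, a') 1)) := by
  have h := vecMulVec_add_star_add_vecMulVec_sub_star (Pi.single (false, a) (1 : ℂ))
    (Pi.single (true, a') 1)
  simp only [star_add, star_sub, Pi.star_single, star_one, smul_add] at h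
  cases hf : f a a' <;> simp [pairVec, pairSign, hf, ← sub_eq_add_neg, h, add_comm]

variable [Fintype α]

theorem star_pairVec_dotProduct_pairVec (s t : ℂ) (a a' a0 a1 : α) :
    star (pairVec s a a') ⬝ᵥ pairVec t a0 a1 =
      (if a = a0 then 1 else 0) + star s * t * (if a' = a1 then 1 else 0) := by
  simp [pairVec, dotProduct_add, Pi.single_apply, star_smul, eq_comm, mul_comm]

noncomputable def pairPOVM (f : α → α → Bool) (k : Bool) : Matrix (Bool × α) (Bool × α) ℂ :=
  (2 * Fintype.card α : ℂ)⁻¹ • ∑ a, ∑ a',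
    vecMulVec (pairVec (pairSign f k a a') a a') (star (pairVec (pairSign f k a a') a a'))

theorem pairPOVM_posSemidef (f : α → α → Bool) (k : Bool) : (pairPOVM f k).PosSemidef :=
  .smul (posSemidef_sum _ fun _ _ => posSemidef_sum _ fun _ _ =>
    posSemidef_vecMulVec_self_star _) (by positivity)

theorem sum_sum_vecMulVec_single_add :
    ∑ a : α, ∑ a' : α, (vecMulVec (Pi.single (false, a) (1 : ℂ)) (Pi.single (false, a) 1) +
      vecMulVec (Pi.single (true, a') 1) (Pi.single (true, a') 1)) = (Fintype.card α : ℂ) • 1 := by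
  rw [← sum_vecMulVec_single_one, Fintype.sum_prod_type, Fintype.sum_bool]
  simp only [Finset.sum_add_distrib, Finset.sum_const, Finset.card_univ, ← Finset.smul_sum,
    smul_add, Nat.cast_smul_eq_nsmul, add_comm]

theorem pairPOVM_false_add_true [Nonempty α] (f : α → α → Bool) :
    pairPOVM f false + pairPOVM f true = 1 := by
  have hN : (Fintype.card α : ℂ) ≠ 0 := Nat.cast_ne_zero.mpr Fintype.card_ne_zero
  simp only [pairPOVM, ← smul_add, ← Finset.sum_add_distrib, vecMulVec_pairVec_false_add_true,
    ← Finset.smul_sum, sum_sum_vecMulVec_single_add, smul_smul]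
  rw [inv_mul_cancel₀ (mul_ne_zero two_ne_zero hN), one_smul]

theorem star_pairVec_dotProduct_pairPOVM_mulVec (f : α → α → Bool) (a0 a1 : α) :
    star (pairVec 1 a0 a1) ⬝ᵥ (pairPOVM f (f a0 a1) *ᵥ pairVec 1 a0 a1) =
      1 + (Fintype.card α : ℂ)⁻¹ := by
  have : Nonempty α := ⟨a0⟩
  have hN : (Fintype.card α : ℂ) ≠ 0 := Nat.cast_ne_zero.mpr Fintype.card_ne_zero
  have hpair : ∀ a a', (star (pairVec 1 a0 a1) ⬝ᵥ pairVec (pairSign f (f a0 a1) a a') a a') *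
      (star (pairVec (pairSign f (f a0 a1) a a') a a') ⬝ᵥ pairVec 1 a0 a1) =
      (if a = a0 then 1 else 0) + (if a' = a1 then 1 else 0) +
        (if a = a0 then if a' = a1 then 2 else 0 else 0) := by
    intro a a'
    simp only [star_pairVec_dotProduct_pairVec, star_one, one_mul, mul_one, star_pairSign]
    rcases eq_or_ne a a0 with rfl | ha <;> rcases eq_or_ne a' a1 with rfl | ha'
    · simp only [if_true, pairSign]; norm_num
    · simp [ha', ha'.symm]
    · simp [ha, ha.symm, pairSign_mul_self]
    · simp [ha, ha.symm, ha', ha'.symm]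
  simp only [pairPOVM, smul_mulVec, dotProduct_smul, sum_mulVec, dotProduct_sum,
    star_dotProduct_vecMulVec_mulVec, hpair]
  simp only [Finset.sum_add_distrib, Finset.sum_ite_irrel, Finset.sum_const, Finset.card_univ,
    nsmul_eq_mul, mul_one, mul_zero, Fintype.sum_ite_eq', smul_eq_mul]
  field_simp
  ring

end PairPOVM

theorem Psi_eq_smul_pairVec (b : ℕ) (a0 a1 : Fin b → Bool) :
    Psi b a0 a1 = (Real.sqrt 2 : ℂ)⁻¹ • pairVec 1 a0 a1 := by
  ext p
  simp [Psi, pairVec, Pi.single_apply, div_eq_inv_mul]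

theorem stmt2_general (b : ℕ)
    (f : (Fin b → Bool) → (Fin b → Bool) → Bool) :
    ∃ E : Bool → Matrix (Bool × (Fin b → Bool)) (Bool × (Fin b → Bool)) ℂ,
      (E false).PosSemidef ∧ (E true).PosSemidef ∧ E false + E true = 1 ∧
      ∀ a0 a1 : Fin b → Bool,
        star (Psi b a0 a1) ⬝ᵥ (E (f a0 a1) *ᵥ Psi b a0 a1) =
          (1 / 2 + 1 / 2 ^ (b + 1) : ℂ) := by
  refine ⟨pairPOVM f, pairPOVM_posSemidef f false, pairPOVM_posSemidef f true,
    pairPOVM_false_add_true f, fun a0 a1 => ?_⟩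
  have hsqrt : star ((Real.sqrt 2 : ℂ)⁻¹) * (Real.sqrt 2 : ℂ)⁻¹ = 1 / 2 := by
    rw [star_inv₀, Complex.star_def, Complex.conj_ofReal, ← mul_inv, ← Complex.ofReal_mul,
      Real.mul_self_sqrt zero_le_two]
    norm_num
  rw [Psi_eq_smul_pairVec, star_smul_dotProduct_mulVec_smul, hsqrt,
    star_pairVec_dotProduct_pairPOVM_mulVec, Fintype.card_fun, Fintype.card_bool, Fintype.card_fin]
  push_cast
  ring

/-- for every `b ≥ 1` and every `f : {0,1}^b × {0,1}^b → {0,1}` there is a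
two-outcome POVM `(E0, E1)` on `ℂ^{2^{b+1}}` such that for all `a0, a1`,
`⟨Ψ_{a0 a1}, E_{f(a0,a1)} Ψ_{a0 a1}⟩ = 1/2 + 1/2^{b+1}`. -/
theorem stmt2 (b : ℕ) (hb : 1 ≤ b)
    (f : (Fin b → Bool) → (Fin b → Bool) → Bool) :
    ∃ E : Bool → Matrix (Bool × (Fin b → Bool)) (Bool × (Fin b → Bool)) ℂ,
      (E false).PosSemidef ∧ (E true).PosSemidef ∧ E false + E true = 1 ∧
      ∀ a0 a1 : Fin b → Bool,
        star (Psi b a0 a1) ⬝ᵥ (E (f a0 a1) *ᵥ Psi b a0 a1) =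
          (1 / 2 + 1 / 2 ^ (b + 1) : ℂ) :=
  stmt2_general b f
end

section
/- Fix b ≥ 1. For c ∈ {0,1} define the density matrix ρ_c = (1/2^{2b−1}) · Σ_{a0,a1 ∈ {0,1}^b with |a0|+|a1| ≡ c (mod 2)} |Ψ_{a0 a1}⟩⟨Ψ_{a0 a1}|, where |a| denotes the Hamming weight of the string a. Then ‖ρ0 − ρ1‖_tr = 2 / 2^b. -/
/-! The signed sum `ρ₀ - ρ₁ = 2^{-(2b-1)} Σ (-1)^{|a₀|+|a₁|} |Ψ_{a₀a₁}⟩⟨Ψ_{a₀a₁}|` loses its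
diagonal blocks, because `Σ_x (-1)^{|x|} = 0` for `b ≥ 1`, and equals `2^{-2b} (u vᵀ + v uᵀ)`,
where `u` and `v` carry the signs `(-1)^{|x|}` on the blocks `|0⟩ ⊗ ·` and `|1⟩ ⊗ ·`.
As `u ⟂ v` and `|u|² = |v|² = N = 2^b`, the matrix `F = u vᵀ + v uᵀ` satisfies `F³ = N² F`.
Any Hermitian `A` with `A³ = c² A` has eigenvalues in `{0, ±c}`, so `|t| = t² / c` for each of
them and the trace norm of `A` is `tr (A²) / c`. -/

open ComplexOrder Matrix

/-- Hamming weight of a bit string. -/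
def wt {b : ℕ} (a : Fin b → Bool) : ℕ := (Finset.univ.filter fun k => a k = true).card

/-- The density matrix `ρ_c = (1/2^{2b-1}) Σ_{|a0|+|a1| ≡ c (mod 2)} |Ψ_{a0 a1}⟩⟨Ψ_{a0 a1}|`,
where `c : Bool` encodes the parity (`false ↔ 0`, `true ↔ 1`). -/
noncomputable def rhoPar (b : ℕ) (c : Bool) :
    Matrix (Bool × (Fin b → Bool)) (Bool × (Fin b → Bool)) ℂ :=
  (1 / 2 ^ (2 * b - 1) : ℂ) •
    ∑ p ∈ Finset.univ.filter
        (fun p : (Fin b → Bool) × (Fin b → Bool) =>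
          (wt p.1 + wt p.2) % 2 = (if c then 1 else 0)),
      Matrix.vecMulVec (Psi b p.1 p.2) (star (Psi b p.1 p.2))

lemma abs_eq_sq_div_of_pow_three_eq {t c : ℝ} (hc : 0 < c) (h : t ^ 3 = c ^ 2 * t) :
    |t| = t ^ 2 / c := by
  rcases eq_or_ne t 0 with rfl | ht
  · simp
  have hsq : |t| ^ 2 = c ^ 2 := by
    rw [sq_abs]
    exact mul_right_cancel₀ ht (by linear_combination h)
  have habs : |t| = c := (pow_left_inj₀ (abs_nonneg t) hc.le two_ne_zero).mp hsq
  rw [← sq_abs, hsq, habs, sq, mul_div_cancel_right₀ _ hc.ne']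

section VecMulVec

variable {R ι : Type*} [CommRing R] [Fintype ι] {u v : ι → R} {N : R}

theorem vecMulVec_add_vecMulVec_mul_self (huu : u ⬝ᵥ u = N) (hvv : v ⬝ᵥ v = N)
    (huv : u ⬝ᵥ v = 0) :
    (vecMulVec u v + vecMulVec v u) * (vecMulVec u v + vecMulVec v u) =
      N • (vecMulVec u u + vecMulVec v v) := by
  have hvu : v ⬝ᵥ u = 0 := by rw [dotProduct_comm, huv]
  simp only [add_mul, mul_add, vecMulVec_mul_vecMulVec, huu, hvv, huv, hvu, zero_smul,
    vecMulVec_zero, vecMulVec_smul]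
  module

theorem vecMulVec_add_vecMulVec_pow_three (huu : u ⬝ᵥ u = N) (hvv : v ⬝ᵥ v = N)
    (huv : u ⬝ᵥ v = 0) :
    (vecMulVec u v + vecMulVec v u) * (vecMulVec u v + vecMulVec v u) *
        (vecMulVec u v + vecMulVec v u) = N ^ 2 • (vecMulVec u v + vecMulVec v u) := by
  have hvu : v ⬝ᵥ u = 0 := by rw [dotProduct_comm, huv]
  rw [vecMulVec_add_vecMulVec_mul_self huu hvv huv]
  simp only [smul_mul_assoc, add_mul, mul_add, vecMulVec_mul_vecMulVec, huu, hvv, huv, hvu, zero_smul,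
    vecMulVec_zero, vecMulVec_smul]
  module

theorem trace_vecMulVec_add_vecMulVec_mul_self (huu : u ⬝ᵥ u = N) (hvv : v ⬝ᵥ v = N)
    (huv : u ⬝ᵥ v = 0) :
    ((vecMulVec u v + vecMulVec v u) * (vecMulVec u v + vecMulVec v u)).trace = 2 * N ^ 2 := by
  rw [vecMulVec_add_vecMulVec_mul_self huu hvv huv, trace_smul, trace_add, trace_vecMulVec,
    trace_vecMulVec, huu, hvv, smul_eq_mul]
  ring

end VecMulVec

namespace Matrix.IsHermitian

variable {𝕜 n : Type*} [RCLike 𝕜] [Fintype n] [DecidableEq n] {A : Matrix n n 𝕜}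

theorem eigenvalues_pow_three_eq (hA : A.IsHermitian) {c : ℝ} (h : A * A * A = (c : 𝕜) • A)
    (i : n) : hA.eigenvalues i ^ 3 = c * hA.eigenvalues i := by
  set D : Matrix n n 𝕜 := diagonal (RCLike.ofReal ∘ hA.eigenvalues)
  have hD : D * D * D = (c : 𝕜) • D := by
    rw [hA.spectral_theorem, ← map_mul, ← map_mul, ← map_smul] at h
    exact EquivLike.injective _ h
  have hii : (hA.eigenvalues i : 𝕜) ^ 3 = c * hA.eigenvalues i := by
    simpa [D, diagonal_mul_diagonal, pow_three, mul_assoc] using congrFun (congrFun hD i) i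
  exact_mod_cast hii

theorem trace_mul_self_eq_sum_eigenvalues_sq (hA : A.IsHermitian) :
    (A * A).trace = ∑ i, ((hA.eigenvalues i ^ 2 : ℝ) : 𝕜) := by
  conv_lhs => rw [hA.spectral_theorem, ← map_mul, Unitary.conjStarAlgAut_apply, trace_mul_cycle,
    Unitary.coe_star_mul_self, one_mul, diagonal_mul_diagonal, trace_diagonal]
  simp [sq]

theorem sum_abs_eigenvalues_of_cube_eq_smul (hA : A.IsHermitian) {c : ℝ} (hc : 0 < c)
    (h : A * A * A = ((c ^ 2 : ℝ) : 𝕜) • A) :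
    ∑ i, |hA.eigenvalues i| = RCLike.re (A * A).trace / c := by
  simp_rw [abs_eq_sq_div_of_pow_three_eq hc (hA.eigenvalues_pow_three_eq h _), ← Finset.sum_div,
    hA.trace_mul_self_eq_sum_eigenvalues_sq, map_sum, RCLike.ofReal_re]

theorem sum_abs_eigenvalues_of_eq_smul_vecMulVec_add (hA : A.IsHermitian) {u v : n → 𝕜}
    {k N : ℝ} (hk : 0 < k) (hN : 0 < N) (huu : u ⬝ᵥ u = N) (hvv : v ⬝ᵥ v = N)
    (huv : u ⬝ᵥ v = 0) (hAuv : A = (k : 𝕜) • (vecMulVec u v + vecMulVec v u)) :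
    ∑ i, |hA.eigenvalues i| = 2 * k * N := by
  have hcube : A * A * A = (((k * N) ^ 2 : ℝ) : 𝕜) • A := by
    rw [hAuv]
    simp only [smul_mul_smul_comm, vecMulVec_add_vecMulVec_pow_three huu hvv huv, smul_smul]
    push_cast
    ring_nf
  have htrace : (k : 𝕜) * k * (2 * (N : 𝕜) ^ 2) = ((2 * (k * N) ^ 2 : ℝ) : 𝕜) := by
    push_cast
    ring
  rw [hA.sum_abs_eigenvalues_of_cube_eq_smul (mul_pos hk hN) hcube, hAuv, smul_mul_smul_comm,
    trace_smul, trace_vecMulVec_add_vecMulVec_mul_self huu hvv huv, smul_eq_mul, htrace,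
    RCLike.ofReal_re]
  field_simp

end Matrix.IsHermitian

theorem neg_one_pow_mul_self {R : Type*} [Ring R] (n : ℕ) : (-1 : R) ^ n * (-1) ^ n = 1 := by
  rw [← pow_add, ← two_mul, pow_mul, neg_one_sq, one_pow]

theorem sum_neg_one_pow_wt {R : Type*} [CommRing R] (b : ℕ) :
    ∑ x : Fin b → Bool, (-1 : R) ^ wt x = 0 ^ b := by
  have hprod (x : Fin b → Bool) : (-1 : R) ^ wt x = ∏ k, if x k then -1 else 1 := by
    rw [wt, ← Finset.prod_const, Finset.prod_filter]
  simp only [hprod]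
  rw [← Fintype.prod_sum fun (_ : Fin b) (β : Bool) => if β then (-1 : R) else 1]
  simp

noncomputable def blockSign (b : ℕ) (c : Bool) : Bool × (Fin b → Bool) → ℂ :=
  fun p => if p.1 = c then (-1) ^ wt p.2 else 0

theorem blockSign_dotProduct_self (b : ℕ) (c : Bool) :
    blockSign b c ⬝ᵥ blockSign b c = 2 ^ b := by
  simp [dotProduct, blockSign, Fintype.sum_prod_type, neg_one_pow_mul_self]

theorem blockSign_dotProduct_of_ne (b : ℕ) {c d : Bool} (h : c ≠ d) :
    blockSign b c ⬝ᵥ blockSign b d = 0 := by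
  simp only [dotProduct, blockSign, Fintype.sum_prod_type]
  cases c <;> cases d <;> simp_all

theorem Psi_apply (b : ℕ) (a0 a1 : Fin b → Bool) (c : Bool) (x : Fin b → Bool) :
    Psi b a0 a1 (c, x) = if x = cond c a1 a0 then ((Real.sqrt 2 : ℝ) : ℂ)⁻¹ else 0 := by
  cases c <;> simp [Psi, eq_comm, ite_div, one_div]

theorem star_Psi (b : ℕ) (a0 a1 : Fin b → Bool) : star (Psi b a0 a1) = Psi b a0 a1 := by
  ext p
  simp only [Psi, Pi.star_apply, star_div₀, star_add, Complex.star_def,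
    Complex.conj_ofReal, apply_ite (starRingEnd ℂ), map_one, map_zero]

theorem rhoPar_false_sub_rhoPar_true_eq_sum (b : ℕ) :
    rhoPar b false - rhoPar b true = (1 / 2 ^ (2 * b - 1) : ℂ) •
      ∑ p : (Fin b → Bool) × (Fin b → Bool),
        (-1 : ℂ) ^ (wt p.1 + wt p.2) • vecMulVec (Psi b p.1 p.2) (Psi b p.1 p.2) := by
  rw [rhoPar, rhoPar, ← smul_sub, Finset.sum_filter, Finset.sum_filter, ← Finset.sum_sub_distrib]
  congr! 2 with p
  rw [star_Psi]
  rcases Nat.even_or_odd (wt p.1 + wt p.2) with h | h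
  · simp [h.neg_one_pow, Nat.even_iff.mp h]
  · simp [h.neg_one_pow, Nat.odd_iff.mp h]

theorem sum_neg_one_pow_smul_vecMulVec_Psi_apply {b : ℕ} (hb : b ≠ 0) (c d : Bool)
    (x y : Fin b → Bool) :
    (∑ p : (Fin b → Bool) × (Fin b → Bool),
        (-1 : ℂ) ^ (wt p.1 + wt p.2) • vecMulVec (Psi b p.1 p.2) (Psi b p.1 p.2)) (c, x) (d, y) =
      if c = d then 0 else (-1) ^ wt x * (-1) ^ wt y / 2 := by
  have hsqrt : ((Real.sqrt 2 : ℝ) : ℂ)⁻¹ * ((Real.sqrt 2 : ℝ) : ℂ)⁻¹ = 1 / 2 := by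
    rw [← mul_inv, ← Complex.ofReal_mul, Real.mul_self_sqrt zero_le_two]
    simp
  simp only [Matrix.sum_apply, Matrix.smul_apply, vecMulVec_apply, Psi_apply, smul_eq_mul,
    Fintype.sum_prod_type, pow_add]
  cases c <;> cases d <;>
    simp [mul_ite, ite_mul, ← Finset.sum_mul, ← Finset.mul_sum, sum_neg_one_pow_wt, hb, hsqrt] <;>
    ring

theorem rhoPar_false_sub_rhoPar_true {b : ℕ} (hb : b ≠ 0) :
    rhoPar b false - rhoPar b true = ((1 / 2 ^ (2 * b) : ℝ) : ℂ) •
      (vecMulVec (blockSign b false) (blockSign b true) +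
        vecMulVec (blockSign b true) (blockSign b false)) := by
  have hpow : (2 : ℂ) ^ (2 * b) = 2 ^ (2 * b - 1) * 2 := by
    rw [← pow_succ]
    congr 1
    omega
  ext ⟨c, x⟩ ⟨d, y⟩
  rw [rhoPar_false_sub_rhoPar_true_eq_sum, Matrix.smul_apply,
    sum_neg_one_pow_smul_vecMulVec_Psi_apply hb]
  cases c <;> cases d <;> simp [vecMulVec_apply, blockSign, hpow] <;> ring

/-- `‖ρ0 - ρ1‖_tr = 2 / 2^b`, where the trace norm of the Hermitian matrix
`ρ0 - ρ1` is the sum of the absolute values of its eigenvalues. -/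
theorem stmt4 (b : ℕ) (hb : 1 ≤ b)
    (hH : (rhoPar b false - rhoPar b true).IsHermitian) :
    ∑ i, |hH.eigenvalues i| = 2 / 2 ^ b := by
  have hnorm (c : Bool) : blockSign b c ⬝ᵥ blockSign b c = ((2 ^ b : ℝ) : ℂ) := by
    exact_mod_cast blockSign_dotProduct_self b c
  rw [hH.sum_abs_eigenvalues_of_eq_smul_vecMulVec_add (k := 1 / 2 ^ (2 * b)) (N := 2 ^ b)
    (by positivity) (by positivity)
    (hnorm false) (hnorm true) (blockSign_dotProduct_of_ne b Bool.false_ne_true)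
    (rhoPar_false_sub_rhoPar_true (by omega))]
  rw [two_mul b, pow_add]
  field_simp
end

section
/- (Correctness of the cube PIR scheme.) Let n₁, n₂, n₃ ≥ 1, let x : [n₁] × [n₂] × [n₃] → GF(2), let T₁ ⊆ [n₁], T₂ ⊆ [n₂], T₃ ⊆ [n₃], and let i₁ ∈ [n₁], i₂ ∈ [n₂], i₃ ∈ [n₃]. For k ∈ {1,2,3} and c ∈ {0,1} let T_k^c = T_k if c = 0 and T_k Δ {i_k} (symmetric difference) if c = 1. Then, in GF(2), Σ_{(c₁,c₂,c₃) ∈ {0,1}³} Σ_{j₁ ∈ T₁^{c₁}} Σ_{j₂ ∈ T₂^{c₂}} Σ_{j₃ ∈ T₃^{c₃}} x(j₁, j₂, j₃) = x(i₁, i₂, i₃). Equivalently, with b(U₁,U₂,U₃) = ⊕_{j₁∈U₁, j₂∈U₂, j₃∈U₃} x(j₁,j₂,j₃), the XOR of b over the eight choices of flipping or not flipping i_k into T_k equals x(i₁,i₂,i₃), since every other entry occurs an even number of times in the sum. -/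
lemma sum_symmDiff_singleton {α : Type*} [DecidableEq α] (T : Finset α) (i : α)
    (f : α → ZMod 2) : ∑ j ∈ symmDiff T {i}, f j = (∑ j ∈ T, f j) + f i := by
  by_cases h : i ∈ T
  · have hsd : symmDiff T {i} = T.erase i := by
      ext a
      simp [Finset.mem_symmDiff, Finset.mem_erase]
      constructor
      · rintro (⟨ha, hne⟩ | ⟨rfl, hni⟩)
        · exact ⟨hne, ha⟩
        · exact absurd h hni
      · rintro ⟨hne, ha⟩; exact Or.inl ⟨ha, hne⟩
    rw [hsd]
    have := Finset.sum_erase_add T f h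
    have h2 : f i + f i = 0 := by
      have : (2 : ZMod 2) = 0 := rfl
      calc f i + f i = 2 * f i := by ring
        _ = 0 := by rw [this]; ring
    calc ∑ j ∈ T.erase i, f j = (∑ j ∈ T.erase i, f j + f i) + f i := by
          rw [add_assoc, h2, add_zero]
      _ = (∑ j ∈ T, f j) + f i := by rw [this]
  · have hsd : symmDiff T {i} = insert i T := by
      ext a
      simp [Finset.mem_symmDiff, Finset.mem_insert]
      constructor
      · rintro (⟨ha, _⟩ | ⟨rfl, _⟩)
        · exact Or.inr ha
        · exact Or.inl rfl
      · rintro (rfl | ha)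
        · exact Or.inr ⟨rfl, h⟩
        · exact Or.inl ⟨ha, fun hai => h (hai ▸ ha)⟩
    rw [hsd, Finset.sum_insert h, add_comm]

lemma sum_bool_flip {α : Type*} [DecidableEq α] (T : Finset α) (i : α)
    (f : α → ZMod 2) :
    ∑ b : Bool, ∑ j ∈ (if b then symmDiff T {i} else T), f j = f i := by
  rw [Fintype.sum_bool, if_pos rfl, if_neg (by simp), sum_symmDiff_singleton]
  have : ∀ a b : ZMod 2, a + b + a = b := by decide
  exact this _ _

/-- correctness of the cube PIR scheme: for a database
`x : [n₁] × [n₂] × [n₃] → GF(2)`, sets `T₁, T₂, T₃` and an index `(i₁, i₂, i₃)`, the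
sum (in `GF(2)`) over the eight choices of whether to flip `i_k` into `T_k` (by
symmetric difference) of the sum of `x` over the resulting box equals `x i₁ i₂ i₃`. -/
theorem stmt19 (n1 n2 n3 : ℕ) (h1 : 1 ≤ n1) (h2 : 1 ≤ n2) (h3 : 1 ≤ n3)
    (x : Fin n1 → Fin n2 → Fin n3 → ZMod 2)
    (T1 : Finset (Fin n1)) (T2 : Finset (Fin n2)) (T3 : Finset (Fin n3))
    (i1 : Fin n1) (i2 : Fin n2) (i3 : Fin n3) :
    ∑ c : Bool × Bool × Bool,
      ∑ j1 ∈ (if c.1 then symmDiff T1 {i1} else T1),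
        ∑ j2 ∈ (if c.2.1 then symmDiff T2 {i2} else T2),
          ∑ j3 ∈ (if c.2.2 then symmDiff T3 {i3} else T3),
            x j1 j2 j3 = x i1 i2 i3 := by
  simp only [Fintype.sum_prod_type]
  have step3 : ∀ (U1 : Finset (Fin n1)) (U2 : Finset (Fin n2)),
      (∑ b3 : Bool, ∑ j1 ∈ U1, ∑ j2 ∈ U2,
        ∑ j3 ∈ (if b3 then symmDiff T3 {i3} else T3), x j1 j2 j3)
      = ∑ j1 ∈ U1, ∑ j2 ∈ U2, x j1 j2 i3 := by
    intro U1 U2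
    rw [Finset.sum_comm]
    refine Finset.sum_congr rfl fun j1 _ => ?_
    rw [Finset.sum_comm]
    exact Finset.sum_congr rfl fun j2 _ => sum_bool_flip T3 i3 _
  have step2 : ∀ (U1 : Finset (Fin n1)),
      (∑ b2 : Bool, ∑ j1 ∈ U1,
        ∑ j2 ∈ (if b2 then symmDiff T2 {i2} else T2), x j1 j2 i3)
      = ∑ j1 ∈ U1, x j1 i2 i3 := by
    intro U1
    rw [Finset.sum_comm]
    exact Finset.sum_congr rfl fun j1 _ => sum_bool_flip T2 i2 _
  calc (∑ b1 : Bool, ∑ b2 : Bool, ∑ b3 : Bool,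
      ∑ j1 ∈ (if b1 then symmDiff T1 {i1} else T1),
        ∑ j2 ∈ (if b2 then symmDiff T2 {i2} else T2),
          ∑ j3 ∈ (if b3 then symmDiff T3 {i3} else T3), x j1 j2 j3)
      = ∑ b1 : Bool, ∑ b2 : Bool,
          ∑ j1 ∈ (if b1 then symmDiff T1 {i1} else T1),
            ∑ j2 ∈ (if b2 then symmDiff T2 {i2} else T2), x j1 j2 i3 := by
        exact Finset.sum_congr rfl fun b1 _ =>
          Finset.sum_congr rfl fun b2 _ => step3 _ _
    _ = ∑ b1 : Bool, ∑ j1 ∈ (if b1 then symmDiff T1 {i1} else T1),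
          x j1 i2 i3 := by
        exact Finset.sum_congr rfl fun b1 _ => step2 _
    _ = x i1 i2 i3 := sum_bool_flip T1 i1 _
end
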